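/- Let c > 0 and let d be the divisor function. For any ε > 0 and N ≥ 1, the tail sum x^{1/c} ∑_{k > x/N^c} d(k)(1/k^{1/c} - 1/(k+1)^{1/c}) is O_{ε,c}(N x^ε) as x → ∞, uniformly in N with 1 ≤ N ≤ x^{1/(c+1)}. -/

import Mathlib

open Real

private lemma telescope_hasSum (F : ℕ → ℝ) (hmono : ∀ n, F (n + 1) ≤ F n)
    (hlim : Filter.Tendsto F Filter.atTop (nhds 0)) :
    HasSum (fun n => F n - F (n + 1)) (F 0) := by
  rw [hasSum_iff_tendsto_nat_of_nonneg (fun i => sub_nonneg.2 (hmono i))]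
  have h : (fun n => ∑ i ∈ Finset.range n, (F i - F (i + 1))) = fun n => F 0 - F n := by
    funext n; exact Finset.sum_range_sub' F n
  rw [h]
  simpa using (tendsto_const_nhds.sub hlim)

private lemma rpow_diff_bounds (s : ℝ) (hs : 0 < s) (y : ℝ) (hy : 1 ≤ y) :
    s * (y + 1) ^ (-s - 1) ≤ y ^ (-s) - (y + 1) ^ (-s) ∧
      y ^ (-s) - (y + 1) ^ (-s) ≤ s * y ^ (-s - 1) := by
  have hy0 : (0 : ℝ) < y := lt_of_lt_of_le one_pos hy
  have hlt : y < y + 1 := by linarith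
  have hcont : ContinuousOn (fun t : ℝ => t ^ (-s)) (Set.Icc y (y + 1)) := by
    apply ContinuousOn.rpow_const continuousOn_id
    intro t ht
    exact Or.inl (ne_of_gt (lt_of_lt_of_le hy0 ht.1))
  have hderiv : ∀ t ∈ Set.Ioo y (y + 1),
      HasDerivAt (fun t : ℝ => t ^ (-s)) (-s * t ^ (-s - 1)) t := by
    intro t ht
    have h := Real.hasDerivAt_rpow_const (x := t) (p := -s)
      (Or.inl (ne_of_gt (lt_trans hy0 ht.1)))
    simpa using h
  obtain ⟨ξ, hξ, hslope⟩ := exists_hasDerivAt_eq_slope (fun t : ℝ => t ^ (-s))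
    (fun t => -s * t ^ (-s - 1)) hlt hcont hderiv
  have hden : y + 1 - y = 1 := by ring
  rw [hden, div_one] at hslope
  have hdiff : y ^ (-s) - (y + 1) ^ (-s) = s * ξ ^ (-s - 1) := by
    have := hslope
    nlinarith [this]
  constructor
  · rw [hdiff]
    have hb : (y + 1 : ℝ) ^ (-s - 1) ≤ ξ ^ (-s - 1) :=
      Real.rpow_le_rpow_of_nonpos (lt_trans hy0 hξ.1) hξ.2.le (by linarith)
    exact mul_le_mul_of_nonneg_left hb hs.le
  · rw [hdiff]
    have hb : ξ ^ (-s - 1) ≤ y ^ (-s - 1) :=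
      Real.rpow_le_rpow_of_nonpos hy0 hξ.1.le (by linarith)
    exact mul_le_mul_of_nonneg_left hb hs.le

private lemma divisor_bound (ε : ℝ) (hε : 0 < ε) :
    ∃ A : ℝ, 1 ≤ A ∧ ∀ n : ℕ, ((n.divisors.card : ℝ)) ≤ A * (n : ℝ) ^ ε := by
  have h2 : (1 : ℝ) < (2 : ℝ) ^ ε := by
    have := Real.rpow_lt_rpow_of_exponent_lt (by norm_num : (1:ℝ) < 2) hε
    simpa using this
  set t : ℝ := (2 : ℝ) ^ ε - 1 with ht
  have ht0 : 0 < t := by simp only [ht]; linarith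
  set K : ℝ := max 1 (1 / t) with hK
  have hK1 : 1 ≤ K := le_max_left _ _
  have hKt : 1 ≤ K * t := by
    have h1 : 1 / t ≤ K := le_max_right _ _
    have := mul_le_mul_of_nonneg_right h1 ht0.le
    rwa [one_div_mul_cancel (ne_of_gt ht0)] at this
  set P : ℕ := ⌈(2 : ℝ) ^ (1 / ε)⌉₊ with hP
  refine ⟨K ^ P, one_le_pow₀ hK1, ?_⟩
  intro n
  rcases eq_or_ne n 0 with rfl | hn
  · simp [Real.zero_rpow (ne_of_gt hε)]
  have key : ∀ p ∈ n.primeFactors, ((n.factorization p + 1 : ℕ) : ℝ) ≤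
      (if (p : ℝ) < (2 : ℝ) ^ (1 / ε) then K else 1) *
        ((p : ℝ) ^ (n.factorization p : ℕ)) ^ ε := by
    intro p hp
    have hp2 : 2 ≤ p := (Nat.prime_of_mem_primeFactors hp).two_le
    have hp0 : (0 : ℝ) < (p : ℝ) := by exact_mod_cast (by omega : 0 < p)
    set a := n.factorization p with ha
    have hpa : ((p : ℝ) ^ (a : ℕ)) ^ ε = ((p : ℝ) ^ ε) ^ (a : ℕ) := by
      rw [← Real.rpow_natCast (p : ℝ) a, ← Real.rpow_natCast ((p : ℝ) ^ ε) a,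
        ← Real.rpow_mul hp0.le, ← Real.rpow_mul hp0.le, mul_comm]
    have h2p : (2 : ℝ) ^ ε ≤ (p : ℝ) ^ ε :=
      Real.rpow_le_rpow (by norm_num) (by exact_mod_cast hp2) hε.le
    split_ifs with hsmall
    · have hbern : 1 + (a : ℝ) * t ≤ ((2 : ℝ) ^ ε) ^ (a : ℕ) := by
        have := one_add_mul_le_pow (a := t) (by linarith) a
        have h1t : 1 + t = (2 : ℝ) ^ ε := by simp [ht]
        rwa [h1t] at this
      have hb : ((2 : ℝ) ^ ε) ^ (a : ℕ) ≤ ((p : ℝ) ^ ε) ^ (a : ℕ) :=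
        pow_le_pow_left₀ (by positivity) h2p a
      rw [hpa]
      push_cast
      have hKnn : (0 : ℝ) ≤ K := by linarith
      have h3 : (a : ℝ) + 1 ≤ K * (1 + (a : ℝ) * t) := by
        have h4 : (0 : ℝ) ≤ (a : ℝ) := by positivity
        nlinarith
      calc (a : ℝ) + 1 ≤ K * (1 + (a : ℝ) * t) := h3
        _ ≤ K * ((2 : ℝ) ^ ε) ^ (a : ℕ) := mul_le_mul_of_nonneg_left hbern hKnn
        _ ≤ K * ((p : ℝ) ^ ε) ^ (a : ℕ) := mul_le_mul_of_nonneg_left hb hKnn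
    · have hpe : (2 : ℝ) ≤ (p : ℝ) ^ ε := by
        have h1 : (2 : ℝ) ^ (1 / ε) ≤ (p : ℝ) := not_lt.1 hsmall
        have h2' : ((2 : ℝ) ^ (1 / ε)) ^ ε ≤ (p : ℝ) ^ ε :=
          Real.rpow_le_rpow (by positivity) h1 hε.le
        rwa [← Real.rpow_mul (by norm_num), one_div, inv_mul_cancel₀ (ne_of_gt hε),
          Real.rpow_one] at h2'
      have h2a : ((a : ℝ) + 1) ≤ ((p : ℝ) ^ ε) ^ (a : ℕ) := by
        calc ((a : ℝ) + 1) ≤ (2 : ℝ) ^ (a : ℕ) := by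
              exact_mod_cast Nat.succ_le_of_lt (Nat.lt_two_pow_self (n := a))
          _ ≤ ((p : ℝ) ^ ε) ^ (a : ℕ) := pow_le_pow_left₀ (by norm_num) hpe a
      rw [hpa, one_mul]
      push_cast
      exact h2a
  have hcard : ((n.divisors.card : ℕ) : ℝ)
      = ∏ p ∈ n.primeFactors, ((n.factorization p + 1 : ℕ) : ℝ) := by
    rw [Nat.card_divisors hn, Nat.cast_prod]
  have hrn : (n : ℝ) ^ ε = ∏ p ∈ n.primeFactors, ((p : ℝ) ^ (n.factorization p : ℕ)) ^ ε := by
    rw [Real.finset_prod_rpow _ _ (fun p _ => by positivity) ε]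
    congr 1
    conv_lhs => rw [← Nat.factorization_prod_pow_eq_self hn]
    rw [Finsupp.prod, Nat.support_factorization]
    push_cast
    rfl
  calc ((n.divisors.card : ℕ) : ℝ)
      = ∏ p ∈ n.primeFactors, ((n.factorization p + 1 : ℕ) : ℝ) := hcard
    _ ≤ ∏ p ∈ n.primeFactors, ((if (p : ℝ) < (2 : ℝ) ^ (1 / ε) then K else 1) *
          ((p : ℝ) ^ (n.factorization p : ℕ)) ^ ε) :=
        Finset.prod_le_prod (fun p _ => by positivity) key
    _ = (∏ p ∈ n.primeFactors, (if (p : ℝ) < (2 : ℝ) ^ (1 / ε) then K else 1)) *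
          ∏ p ∈ n.primeFactors, ((p : ℝ) ^ (n.factorization p : ℕ)) ^ ε :=
        Finset.prod_mul_distrib
    _ ≤ K ^ P * (n : ℝ) ^ ε := by
        rw [← hrn]
        apply mul_le_mul_of_nonneg_right _ (by positivity)
        rw [Finset.prod_ite, Finset.prod_const, Finset.prod_const_one, mul_one]
        apply pow_le_pow_right₀ hK1
        have hsub : (n.primeFactors.filter (fun p : ℕ => (p : ℝ) < (2 : ℝ) ^ (1 / ε)))
            ⊆ Finset.range P := by
          intro p hp
          simp only [Finset.mem_filter] at hp
          have hlt : (p : ℝ) < (P : ℝ) :=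
            lt_of_lt_of_le hp.2 (Nat.le_ceil _)
          exact Finset.mem_range.2 (Nat.cast_lt.mp hlt)
        exact le_trans (Finset.card_le_card hsub) (le_of_eq (Finset.card_range P))

/-- The tail sum `x^{1/c} ∑_{k > x/N^c} d(k)(1/k^{1/c} - 1/(k+1)^{1/c})` is
`O_{ε,c}(N x^ε)`, uniformly in `N` with `1 ≤ N ≤ x^{1/(c+1)}`. -/
theorem tail_sum_bound (c : ℝ) (hc : 0 < c) (ε : ℝ) (hε : 0 < ε) :
    ∃ C > 0, ∀ x : ℝ, 2 ≤ x → ∀ N : ℝ, 1 ≤ N → N ≤ x ^ (1 / (c + 1)) →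
      x ^ (1 / c) * ∑' k : ℕ,
          (if x / N ^ c < (k : ℝ) then
            ((Nat.divisors k).card : ℝ) *
              (1 / (k : ℝ) ^ (1 / c) - 1 / ((k : ℝ) + 1) ^ (1 / c))
          else 0)
        ≤ C * N * x ^ ε := by
  set ε' : ℝ := min ε (1 / (2 * c)) with hε'def
  have hε'0 : 0 < ε' := lt_min hε (by positivity)
  have hε'ε : ε' ≤ ε := min_le_left _ _
  set δ : ℝ := 1 / c - ε' with hδdef
  have hδ0 : 0 < δ := by
    have h1 : ε' ≤ 1 / (2 * c) := min_le_right _ _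
    have h2 : 1 / (2 * c) < 1 / c := one_div_lt_one_div_of_lt hc (by linarith)
    simp only [hδdef]; linarith
  obtain ⟨A, hA1, hA⟩ := divisor_bound ε' hε'0
  have hA0 : (0 : ℝ) < A := lt_of_lt_of_le one_pos hA1
  set B : ℝ := A * (1 / c) * (2 : ℝ) ^ (1 + δ) * (1 / δ) with hBdef
  have h2pos : (0 : ℝ) < (2 : ℝ) ^ (1 + δ) := Real.rpow_pos_of_pos (by norm_num) _
  have hB0 : 0 < B := by positivity
  refine ⟨B, hB0, ?_⟩
  intro x hx N hN1 hNx
  have hx0 : (0 : ℝ) < x := by linarith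
  have hN0 : (0 : ℝ) < N := by linarith
  have hNc : (0 : ℝ) < N ^ c := Real.rpow_pos_of_pos hN0 c
  set T : ℝ := x / N ^ c with hTdef
  have hT0 : 0 < T := div_pos hx0 hNc
  have h1Nc : (1 : ℝ) ≤ N ^ c := by
    rw [← Real.one_rpow c]; exact Real.rpow_le_rpow (by norm_num) hN1 hc.le
  have hTx : T ≤ x := div_le_self hx0.le h1Nc
  set m : ℕ := ⌊T⌋₊ + 1 with hmdef
  have hm1 : 1 ≤ m := by omega
  have hmT : T < (m : ℝ) := by
    have := Nat.lt_floor_add_one T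
    push_cast [hmdef]
    push_cast at this
    linarith
  have hcond : ∀ k : ℕ, T < (k : ℝ) ↔ m ≤ k := by
    intro k
    rw [hmdef, Nat.add_one_le_iff, Nat.floor_lt hT0.le]
  -- the dominating telescoping series
  set G : ℕ → ℝ := fun k => ((max k m : ℕ) : ℝ) ^ (-δ) with hGdef
  have hGmono : ∀ k, G (k + 1) ≤ G k := by
    intro k
    apply Real.rpow_le_rpow_of_nonpos
    · have : 1 ≤ max k m := le_trans hm1 (le_max_right _ _)
      exact_mod_cast this
    · exact_mod_cast max_le_max (Nat.le_succ k) (le_refl m)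
    · linarith
  have hGlim : Filter.Tendsto G Filter.atTop (nhds 0) := by
    apply (tendsto_rpow_neg_atTop hδ0).comp
    apply Filter.tendsto_atTop_mono (fun k => ?_) tendsto_natCast_atTop_atTop
    exact_mod_cast Nat.cast_le.mpr (le_max_left k m)
  have hG0 : G 0 = (m : ℝ) ^ (-δ) := by
    simp [hGdef]
  have hTel : HasSum (fun k : ℕ => B * (G k - G (k + 1))) (B * (m : ℝ) ^ (-δ)) := by
    have := (telescope_hasSum G hGmono hGlim).mul_left B
    rwa [hG0] at this
  have hFeq : (fun k : ℕ => if T < (k : ℝ) then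
      B * ((k : ℝ) ^ (-δ) - ((k : ℝ) + 1) ^ (-δ)) else 0)
      = fun k : ℕ => B * (G k - G (k + 1)) := by
    funext k
    by_cases hk : T < (k : ℝ)
    · rw [if_pos hk]
      have hk' : m ≤ k := (hcond k).1 hk
      have h1 : max k m = k := max_eq_left hk'
      have h2 : max (k + 1) m = k + 1 := max_eq_left (by omega)
      simp only [hGdef, h1, h2]
      push_cast
      ring
    · rw [if_neg hk]
      have hk' : ¬ m ≤ k := fun h => hk ((hcond k).2 h)
      have h1 : max k m = m := max_eq_right (by omega)
      have h2 : max (k + 1) m = m := max_eq_right (by omega)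
      simp only [hGdef, h1, h2, sub_self, mul_zero]
  have hF : HasSum (fun k : ℕ => if T < (k : ℝ) then
      B * ((k : ℝ) ^ (-δ) - ((k : ℝ) + 1) ^ (-δ)) else 0) (B * (m : ℝ) ^ (-δ)) := by
    rw [hFeq]; exact hTel
  -- termwise comparison
  set f : ℕ → ℝ := fun k => if T < (k : ℝ) then
      ((Nat.divisors k).card : ℝ) *
        (1 / (k : ℝ) ^ (1 / c) - 1 / ((k : ℝ) + 1) ^ (1 / c)) else 0 with hfdef
  have hf0 : ∀ k, 0 ≤ f k := by
    intro k
    simp only [hfdef]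
    split_ifs with hk
    · have hk1 : (1 : ℝ) ≤ (k : ℝ) := by
        have : 1 ≤ k := by
          by_contra h
          push_neg at h
          interval_cases k
          · simp at hk; linarith
        exact_mod_cast this
      apply mul_nonneg (by positivity)
      have hkp : (0 : ℝ) < (k : ℝ) ^ (1 / c) := Real.rpow_pos_of_pos (by linarith) _
      have hle : (k : ℝ) ^ (1 / c) ≤ ((k : ℝ) + 1) ^ (1 / c) :=
        Real.rpow_le_rpow (by linarith) (by linarith) (by positivity)
      have := one_div_le_one_div_of_le hkp hle
      linarith
    · exact le_refl 0
  have hle : ∀ k, f k ≤ (if T < (k : ℝ) then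
      B * ((k : ℝ) ^ (-δ) - ((k : ℝ) + 1) ^ (-δ)) else 0) := by
    intro k
    simp only [hfdef]
    split_ifs with hk
    · have hk1n : 1 ≤ k := by
        by_contra h
        push_neg at h
        interval_cases k
        · simp at hk; linarith
      have hk1 : (1 : ℝ) ≤ (k : ℝ) := by exact_mod_cast hk1n
      have hk0 : (0 : ℝ) < (k : ℝ) := by linarith
      obtain ⟨hg1, hg2⟩ := rpow_diff_bounds (1 / c) (by positivity) (k : ℝ) hk1
      obtain ⟨hh1, hh2⟩ := rpow_diff_bounds δ hδ0 (k : ℝ) hk1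
      -- rewrite 1/k^(1/c) as k^(-(1/c))
      have hrw : 1 / (k : ℝ) ^ (1 / c) - 1 / ((k : ℝ) + 1) ^ (1 / c)
          = (k : ℝ) ^ (-(1 / c)) - ((k : ℝ) + 1) ^ (-(1 / c)) := by
        rw [Real.rpow_neg hk0.le, Real.rpow_neg (by linarith)]
        simp only [one_div]
      rw [hrw]
      have hdg0 : 0 ≤ (k : ℝ) ^ (-(1 / c)) - ((k : ℝ) + 1) ^ (-(1 / c)) := by
        have := hg1
        have h2p : (0:ℝ) ≤ (1/c) * ((k:ℝ)+1) ^ (-(1/c)-1) := by positivity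
        linarith
      have hd : ((Nat.divisors k).card : ℝ) ≤ A * (k : ℝ) ^ ε' := hA k
      have step1 : ((Nat.divisors k).card : ℝ) *
          ((k : ℝ) ^ (-(1 / c)) - ((k : ℝ) + 1) ^ (-(1 / c)))
          ≤ (A * (k : ℝ) ^ ε') * ((1 / c) * (k : ℝ) ^ (-(1 / c) - 1)) := by
        apply mul_le_mul hd hg2 hdg0 (by positivity)
      have hexp : (k : ℝ) ^ ε' * (k : ℝ) ^ (-(1 / c) - 1) = (k : ℝ) ^ (-δ - 1) := by
        rw [← Real.rpow_add hk0]
        congr 1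
        simp only [hδdef]; ring
      have step2 : (A * (k : ℝ) ^ ε') * ((1 / c) * (k : ℝ) ^ (-(1 / c) - 1))
          = A * (1 / c) * (k : ℝ) ^ (-δ - 1) := by
        rw [← hexp]; ring
      -- k^(-δ-1) ≤ 2^(1+δ) * (k+1)^(-δ-1)
      have h2k : (k : ℝ) + 1 ≤ 2 * (k : ℝ) := by linarith
      have hmono2 : (2 * (k : ℝ)) ^ (-δ - 1) ≤ ((k : ℝ) + 1) ^ (-δ - 1) :=
        Real.rpow_le_rpow_of_nonpos (by linarith) h2k (by linarith)
      have hmul2 : (2 * (k : ℝ)) ^ (-δ - 1) = (2 : ℝ) ^ (-δ - 1) * (k : ℝ) ^ (-δ - 1) :=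
        Real.mul_rpow (by norm_num) hk0.le
      have h22 : (2 : ℝ) ^ (1 + δ) * (2 : ℝ) ^ (-δ - 1) = 1 := by
        rw [← Real.rpow_add (by norm_num)]
        have h0 : (1 : ℝ) + δ + (-δ - 1) = 0 := by ring
        rw [h0, Real.rpow_zero]
      have step3 : (k : ℝ) ^ (-δ - 1) ≤ (2 : ℝ) ^ (1 + δ) * ((k : ℝ) + 1) ^ (-δ - 1) := by
        calc (k : ℝ) ^ (-δ - 1)
            = ((2 : ℝ) ^ (1 + δ) * (2 : ℝ) ^ (-δ - 1)) * (k : ℝ) ^ (-δ - 1) := by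
              rw [h22, one_mul]
          _ = (2 : ℝ) ^ (1 + δ) * ((2 * (k : ℝ)) ^ (-δ - 1)) := by rw [hmul2]; ring
          _ ≤ (2 : ℝ) ^ (1 + δ) * ((k : ℝ) + 1) ^ (-δ - 1) :=
              mul_le_mul_of_nonneg_left hmono2 h2pos.le
      have step4 : ((k : ℝ) + 1) ^ (-δ - 1)
          ≤ (1 / δ) * ((k : ℝ) ^ (-δ) - ((k : ℝ) + 1) ^ (-δ)) := by
        have hstep := mul_le_mul_of_nonneg_left hh1
          (le_of_lt (by positivity : (0:ℝ) < 1 / δ))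
        calc ((k : ℝ) + 1) ^ (-δ - 1)
            = (1 / δ) * (δ * ((k : ℝ) + 1) ^ (-δ - 1)) := by field_simp
          _ ≤ (1 / δ) * ((k : ℝ) ^ (-δ) - ((k : ℝ) + 1) ^ (-δ)) := hstep
      calc ((Nat.divisors k).card : ℝ) *
            ((k : ℝ) ^ (-(1 / c)) - ((k : ℝ) + 1) ^ (-(1 / c)))
          ≤ A * (1 / c) * (k : ℝ) ^ (-δ - 1) := by rw [← step2]; exact step1
        _ ≤ A * (1 / c) * ((2 : ℝ) ^ (1 + δ) * ((k : ℝ) + 1) ^ (-δ - 1)) :=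
            mul_le_mul_of_nonneg_left step3 (by positivity)
        _ ≤ A * (1 / c) * ((2 : ℝ) ^ (1 + δ) *
              ((1 / δ) * ((k : ℝ) ^ (-δ) - ((k : ℝ) + 1) ^ (-δ)))) := by
            apply mul_le_mul_of_nonneg_left _ (by positivity)
            exact mul_le_mul_of_nonneg_left step4 h2pos.le
        _ = B * ((k : ℝ) ^ (-δ) - ((k : ℝ) + 1) ^ (-δ)) := by
            simp only [hBdef]; ring
    · exact le_refl 0
  have hsummable : Summable f := Summable.of_nonneg_of_le hf0 hle hF.summable
  have hsum : (∑' k, f k) ≤ B * (m : ℝ) ^ (-δ) := by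
    rw [← hF.tsum_eq]
    exact Summable.tsum_le_tsum hle hsummable hF.summable
  -- final arithmetic
  have hmδ : (m : ℝ) ^ (-δ) ≤ T ^ (-δ) :=
    Real.rpow_le_rpow_of_nonpos hT0 hmT.le (by linarith)
  have hxc : (0 : ℝ) < x ^ (1 / c) := Real.rpow_pos_of_pos hx0 _
  have hTsplit : T ^ (-δ) = T ^ (-(1 / c)) * T ^ ε' := by
    rw [← Real.rpow_add hT0]
    congr 1
    simp only [hδdef]; ring
  have hTε : T ^ ε' ≤ x ^ ε := by
    calc T ^ ε' ≤ x ^ ε' := Real.rpow_le_rpow hT0.le hTx hε'0.le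
      _ ≤ x ^ ε := Real.rpow_le_rpow_of_exponent_le (by linarith) hε'ε
  have hNcc : (N ^ c) ^ (1 / c) = N := by
    rw [← Real.rpow_mul hN0.le, mul_one_div_cancel (ne_of_gt hc), Real.rpow_one]
  have hT1c : T ^ (1 / c) = x ^ (1 / c) / N := by
    rw [hTdef, Real.div_rpow hx0.le hNc.le, hNcc]
  have hkey : x ^ (1 / c) * T ^ (-(1 / c)) = N := by
    rw [Real.rpow_neg hT0.le, hT1c]
    field_simp
  calc x ^ (1 / c) * (∑' k, f k)
      ≤ x ^ (1 / c) * (B * (m : ℝ) ^ (-δ)) := by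
        apply mul_le_mul_of_nonneg_left hsum hxc.le
    _ ≤ x ^ (1 / c) * (B * T ^ (-δ)) := by
        apply mul_le_mul_of_nonneg_left _ hxc.le
        exact mul_le_mul_of_nonneg_left hmδ hB0.le
    _ = B * (x ^ (1 / c) * T ^ (-(1 / c))) * T ^ ε' := by
        rw [hTsplit]; ring
    _ = B * N * T ^ ε' := by rw [hkey]
    _ ≤ B * N * x ^ ε := by
        apply mul_le_mul_of_nonneg_left hTε (by positivity)
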